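/- Logical equivalence is transitive: if Γ ⊢ M ≈ N : A and Γ ⊢ N ≈ O : A then Γ ⊢ M ≈ O : A. -/

import Mathlib

/-- Simple types: base type `i` and function types. -/
inductive Ty : Type
  | base : Ty
  | arr  : Ty → Ty → Ty

/-- Untyped lambda terms with de Bruijn indices. -/
inductive Tm : Type
  | var : ℕ → Tm
  | lam : Tm → Tm
  | app : Tm → Tm → Tm

namespace Tm

def upRen (ρ : ℕ → ℕ) : ℕ → ℕ
  | 0 => 0
  | n + 1 => ρ n + 1

/-- Renaming. -/
def rename (ρ : ℕ → ℕ) : Tm → Tm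
  | var n => var (ρ n)
  | lam M => lam (rename (upRen ρ) M)
  | app M N => app (rename ρ M) (rename ρ N)

/-- Lifting a simultaneous substitution under a binder. -/
def lift (σ : ℕ → Tm) : ℕ → Tm
  | 0 => var 0
  | n + 1 => rename Nat.succ (σ n)

/-- Simultaneous (capture-avoiding) substitution. -/
def subst (σ : ℕ → Tm) : Tm → Tm
  | var n => σ n
  | lam M => lam (subst (lift σ) M)
  | app M N => app (subst σ M) (subst σ N)

/-- Extending a substitution with a term for the top variable. -/
def scons (N : Tm) (σ : ℕ → Tm) : ℕ → Tm
  | 0 => N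
  | n + 1 => σ n

/-- Substitution of a single term for the top variable. -/
def subst1 (N M : Tm) : Tm := subst (scons N var) M

end Tm

/-- Single-step weak head reduction. -/
inductive Step : Tm → Tm → Prop
  | beta {M N : Tm} : Step (Tm.app (Tm.lam M) N) (Tm.subst1 N M)
  | app {M M' N : Tm} : Step M M' → Step (Tm.app M N) (Tm.app M' N)

/-- Multi-step weak head reduction (reflexive-transitive closure). -/
inductive MStep : Tm → Tm → Prop
  | refl {M : Tm} : MStep M M
  | trans1 {M M' M'' : Tm} : Step M M' → MStep M' M'' → MStep M M''

/-- Paths (neutral terms): a variable applied to arguments. -/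
inductive IsPath : Tm → Prop
  | var {n : ℕ} : IsPath (Tm.var n)
  | app {M N : Tm} : IsPath M → IsPath (Tm.app M N)

/-- Typing contexts (de Bruijn): the `n`-th entry types variable `n`. -/
abbrev Ctx := List Ty

mutual
  /-- Algorithmic term equivalence `Γ ⊢ M ⇔ N : A`. -/
  inductive AlgTm : Ctx → Tm → Tm → Ty → Prop
    | base {Γ : Ctx} {M N P Q : Tm} :
        MStep M P → MStep N Q → AlgPath Γ P Q Ty.base → AlgTm Γ M N Ty.base
    | arr {Γ : Ctx} {M N : Tm} {A B : Ty} :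
        AlgTm (A :: Γ) (Tm.app (Tm.rename Nat.succ M) (Tm.var 0))
                       (Tm.app (Tm.rename Nat.succ N) (Tm.var 0)) B →
        AlgTm Γ M N (Ty.arr A B)

  /-- Algorithmic path equivalence `Γ ⊢ M ↔ N : A`. -/
  inductive AlgPath : Ctx → Tm → Tm → Ty → Prop
    | var {Γ : Ctx} {n : ℕ} {A : Ty} :
        Γ[n]? = some A → AlgPath Γ (Tm.var n) (Tm.var n) A
    | app {Γ : Ctx} {M1 M2 N1 N2 : Tm} {A B : Ty} :
        AlgPath Γ M1 M2 (Ty.arr A B) → AlgTm Γ N1 N2 A →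
        AlgPath Γ (Tm.app M1 N1) (Tm.app M2 N2) B
end

/-- `PathSub Δ π Γ`: π maps each variable `x:T` of Γ to a path `P` with `Δ ⊢ P ↔ P : T`. -/
def PathSub (Δ : Ctx) (π : ℕ → Tm) (Γ : Ctx) : Prop :=
  ∀ n A, Γ[n]? = some A → AlgPath Δ (π n) (π n) A

/-- Logical equivalence `Γ ⊢ M ≈ N : A`, defined by recursion on the type. -/
def Log : Ty → Ctx → Tm → Tm → Prop
  | Ty.base => fun Γ M N => AlgTm Γ M N Ty.base
  | Ty.arr A B => fun Γ M N =>
      ∀ (Δ : Ctx) (π : ℕ → Tm), PathSub Δ π Γ →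
        ∀ N1 N2, Log A Δ N1 N2 →
          Log B Δ (Tm.app (Tm.subst π M) N1) (Tm.app (Tm.subst π N) N2)

/-- `LogSub Δ σ1 σ2 Γ`: the substitutions σ1, σ2 are pointwise logically related at Γ. -/
def LogSub (Δ : Ctx) (σ1 σ2 : ℕ → Tm) (Γ : Ctx) : Prop :=
  ∀ n A, Γ[n]? = some A → Log A Δ (σ1 n) (σ2 n)

/-- Declarative equivalence `Γ ⊢ M ≡ N : A`. -/
inductive Decl : Ctx → Tm → Tm → Ty → Prop
  | beta {Γ : Ctx} {M1 M2 N1 N2 : Tm} {A B : Ty} :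
      Decl (A :: Γ) M2 N2 B → Decl Γ M1 N1 A →
      Decl Γ (Tm.app (Tm.lam M2) M1) (Tm.subst1 N1 N2) B
  | lam {Γ : Ctx} {M N : Tm} {A B : Ty} :
      Decl (A :: Γ) M N B → Decl Γ (Tm.lam M) (Tm.lam N) (Ty.arr A B)
  | ext {Γ : Ctx} {M N : Tm} {A B : Ty} :
      Decl (A :: Γ) (Tm.app (Tm.rename Nat.succ M) (Tm.var 0))
                    (Tm.app (Tm.rename Nat.succ N) (Tm.var 0)) B →
      Decl Γ M N (Ty.arr A B)
  | var {Γ : Ctx} {n : ℕ} {A : Ty} :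
      Γ[n]? = some A → Decl Γ (Tm.var n) (Tm.var n) A
  | app {Γ : Ctx} {M1 M2 N1 N2 : Tm} {A B : Ty} :
      Decl Γ M1 M2 (Ty.arr A B) → Decl Γ N1 N2 A →
      Decl Γ (Tm.app M1 N1) (Tm.app M2 N2) B
  | symm {Γ : Ctx} {M N : Tm} {A : Ty} : Decl Γ M N A → Decl Γ N M A
  | trans {Γ : Ctx} {M N O : Tm} {A : Ty} :
      Decl Γ M N A → Decl Γ N O A → Decl Γ M O A

lemma step_det {M M' M'' : Tm} (h : Step M M') (h' : Step M M'') : M' = M'' := by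
  induction h generalizing M'' with
  | beta => cases h' with
    | beta => rfl
    | app h => cases h
  | app h ih => cases h' with
    | beta => cases h
    | app h2 => rw [ih h2]

lemma path_no_step {M M' : Tm} (hp : IsPath M) (h : Step M M') : False := by
  induction hp generalizing M' with
  | var => cases h
  | app hp ih =>
    cases h with
    | beta => cases hp
    | app h => exact ih h

lemma mstep_det {M P Q : Tm} (h1 : MStep M P) (h2 : MStep M Q)
    (hp : IsPath P) (hq : IsPath Q) : P = Q := by
  induction h1 generalizing Q with
  | refl =>
    cases h2 with
    | refl => rfl
    | trans1 s _ => exact absurd s (path_no_step hp)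
  | trans1 s _ ih =>
    cases h2 with
    | refl => exact absurd s (path_no_step hq)
    | trans1 s' h' =>
      cases step_det s s'
      exact ih h' hp hq

lemma algpath_isPath {Γ M N A} (h : AlgPath Γ M N A) : IsPath M ∧ IsPath N := by
  refine AlgPath.rec (motive_1 := fun _ _ _ _ _ => True)
    (motive_2 := fun _ M N _ _ => IsPath M ∧ IsPath N)
    ?_ ?_ ?_ ?_ h
  · intros; trivial
  · intros; trivial
  · intros; exact ⟨IsPath.var, IsPath.var⟩
  · intro _ _ _ _ _ _ _ _ _ ih _
    exact ⟨IsPath.app ih.1, IsPath.app ih.2⟩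

lemma algtm_symm {Γ M N A} (h : AlgTm Γ M N A) : AlgTm Γ N M A := by
  refine AlgTm.rec (motive_1 := fun Γ M N A _ => AlgTm Γ N M A)
    (motive_2 := fun Γ M N A _ => AlgPath Γ N M A)
    ?_ ?_ ?_ ?_ h
  · intro _ _ _ _ _ hM hN _ ih
    exact AlgTm.base hN hM ih
  · intro _ _ _ _ _ _ ih
    exact AlgTm.arr ih
  · intro _ _ _ hg
    exact AlgPath.var hg
  · intro _ _ _ _ _ _ _ _ _ ihp iht
    exact AlgPath.app ihp iht

lemma algtm_trans {Γ M N O A} (h1 : AlgTm Γ M N A) (h2 : AlgTm Γ N O A) :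
    AlgTm Γ M O A := by
  refine AlgTm.rec
    (motive_1 := fun Γ M N A _ => ∀ O, AlgTm Γ N O A → AlgTm Γ M O A)
    (motive_2 := fun Γ M N A _ => ∀ O A', AlgPath Γ N O A' → A = A' ∧ AlgPath Γ M O A)
    ?_ ?_ ?_ ?_ h1 O h2
  · intro Γ M N P Q hM hN hP ih O h2
    cases h2 with
    | base hN' hO hP' =>
      cases mstep_det hN hN' (algpath_isPath hP).2 (algpath_isPath hP').1
      rcases (algpath_isPath hP') with _
      exact AlgTm.base hM hO (ih _ _ hP').2
  · intro Γ M N A B _ ih O h2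
    cases h2 with
    | arr h' => exact AlgTm.arr (ih _ h')
  · intro Γ n A hget O A' h2
    cases h2 with
    | var hget' =>
      rw [hget] at hget'
      exact ⟨Option.some.inj hget', AlgPath.var hget⟩
  · intro Γ M1 M2 N1 N2 A B hp ht ihp iht O A' h2
    cases h2 with
    | app hp' ht' =>
      obtain ⟨e, hpp⟩ := ihp _ _ hp'
      injection e with eA eB
      subst eA; subst eB
      exact ⟨rfl, AlgPath.app hpp (iht _ ht')⟩

mutual
lemma log_symm' : ∀ (A : Ty) {Γ M N}, Log A Γ M N → Log A Γ N M
  | Ty.base, _, _, _, h => algtm_symm h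
  | Ty.arr A B, _, _, _, h => fun Δ π hπ N1 N2 hN =>
      log_symm' B (h Δ π hπ N2 N1 (log_symm' A hN))
end

mutual
lemma log_trans' : ∀ (A : Ty) {Γ M N O}, Log A Γ M N → Log A Γ N O → Log A Γ M O
  | Ty.base, _, _, _, _, h1, h2 => algtm_trans h1 h2
  | Ty.arr A B, _, _, _, _, h1, h2 => fun Δ π hπ N1 N2 hN =>
      log_trans' B (h1 Δ π hπ N1 N2 hN)
        (h2 Δ π hπ N2 N2 (log_trans' A (log_symm' A hN) hN))
end

/-- Logical equivalence is transitive. -/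
theorem log_trans {Gamma : Ctx} {M N O : Tm} {A : Ty}
    (h1 : Log A Gamma M N) (h2 : Log A Gamma N O) : Log A Gamma M O :=
  log_trans' A h1 h2
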